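/- arXiv:2109.12256 — 5 statements merged into one kernel-verified Lean document; each statement's English description precedes it below -/
import Mathlib

section
/- Let Λ = HahnSeries ℝ ℂ be the Novikov field and let f : ℝ →₀ Λ be a nonzero finitely supported function, regarded as the finite formal sum Σ_{r ∈ f.support} f(r)·z^r ∈ Λ[z^ℝ]. Then the set {t ∈ ℝ | Σ_{r ∈ f.support} f(r) · HahnSeries.single (t·r) 1 = 0} of real numbers t at which the specialization of f at z = T^t vanishes is finite. -/
/-!
For fixed `t`, the term `f r · T^{t r}` has order `ord (f r) + t r`. If these orders are pairwise
distinct, the term of least order cannot be cancelled, so `f(T^t) ≠ 0`. Hence every zero `t`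
satisfies `ord (f r) + t r = ord (f s) + t s` for some exponents `r ≠ s`, an affine equation in `t`
with at most one solution; there are finitely many such pairs.
-/

/-- The Novikov field `Λ = ℂ((T^ℝ))`, realized as Hahn series. -/
local notation "Λ" => HahnSeries ℝ ℂ

namespace HahnSeries

theorem sum_ne_zero_of_injOn_order {Γ R ι : Type*} [LinearOrder Γ] [Zero Γ] [AddCommMonoid R]
    {s : Finset ι} {g : ι → HahnSeries Γ R} (hs : s.Nonempty) (hg : ∀ i ∈ s, g i ≠ 0)
    (hinj : Set.InjOn (fun i => (g i).order) s) :
    ∑ i ∈ s, g i ≠ 0 := by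
  obtain ⟨i₀, hi₀, hmin⟩ := s.exists_min_image (fun i => (g i).order) hs
  have hlt : ∀ i ∈ s, i ≠ i₀ → (g i₀).order < (g i).order := fun i hi hne =>
    (hmin i hi).lt_of_ne fun h => hne (hinj hi hi₀ h.symm)
  intro hsum
  have hcoeff := congrArg (coeff · (g i₀).order) hsum
  simp only [coeff_sum, coeff_zero] at hcoeff
  rw [Finset.sum_eq_single_of_mem i₀ hi₀ fun i hi hne =>
    coeff_eq_zero_of_lt_order (hlt i hi hne)] at hcoeff
  exact hg i₀ hi₀ (coeff_order_eq_zero.mp hcoeff)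

theorem order_mul_single_one {Γ R : Type*} [AddCommMonoid Γ] [LinearOrder Γ]
    [IsOrderedCancelAddMonoid Γ] [Semiring R] [NoZeroDivisors R] [Nontrivial R]
    {x : HahnSeries Γ R} (hx : x ≠ 0) (a : Γ) :
    (x * single a 1).order = x.order + a := by
  rw [order_mul hx (single_ne_zero one_ne_zero), order_single one_ne_zero]

end HahnSeries

theorem subsingleton_setOf_add_mul_eq {K : Type*} [CommRing K] [IsDomain K] (a b : K)
    {c d : K} (hcd : c ≠ d) :
    {t : K | a + t * c = b + t * d}.Subsingleton := by
  intro t₁ (h₁ : a + t₁ * c = b + t₁ * d) t₂ (h₂ : a + t₂ * c = b + t₂ * d)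
  apply mul_right_cancel₀ (sub_ne_zero.mpr hcd)
  linear_combination h₁ - h₂

theorem finite_setOf_not_injOn_add_mul {K : Type*} [CommRing K] [IsDomain K] (a : K → K)
    (s : Finset K) :
    {t : K | ¬ Set.InjOn (fun r => a r + t * r) s}.Finite := by
  have hcover : {t : K | ¬ Set.InjOn (fun r => a r + t * r) s} ⊆
      ⋃ p ∈ s.offDiag, {t : K | a p.1 + t * p.1 = a p.2 + t * p.2} := by
    intro t ht
    simp only [Set.InjOn, Set.mem_ofPred_eq, not_forall] at ht
    obtain ⟨r, hr, r', hr', heq, hne⟩ := ht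
    exact Set.mem_biUnion (x := (r, r')) (Finset.mem_offDiag.mpr ⟨hr, hr', hne⟩) heq
  refine Set.Finite.subset (s.offDiag.finite_toSet.biUnion fun p hp => ?_) hcover
  exact (subsingleton_setOf_add_mul_eq _ _ (Finset.mem_offDiag.mp hp).2.2).finite

/-- **Finiteness of zeros of the specialization of a finite Novikov sum.**
If `f : ℝ →₀ Λ` is a nonzero finite formal sum `Σ_r f(r)·z^r ∈ Λ[z^ℝ]`, then the set of
`t ∈ ℝ` at which the specialization `f(T^t) = Σ_r f(r)·T^{t·r}` vanishes is finite. -/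
theorem finite_zeros_of_specialization (f : ℝ →₀ Λ) (hf : f ≠ 0) :
    {t : ℝ | ∑ r ∈ f.support, f r * HahnSeries.single (t * r) (1 : ℂ) = 0}.Finite := by
  refine (finite_setOf_not_injOn_add_mul (fun r => (f r).order) f.support).subset
    fun t hzero hinj => ?_
  have hcoeff : ∀ r ∈ f.support, f r ≠ 0 := fun r hr => Finsupp.mem_support_iff.mp hr
  refine HahnSeries.sum_ne_zero_of_injOn_order (Finsupp.support_nonempty_iff.mpr hf)
    (fun r hr => mul_ne_zero (hcoeff r hr) (HahnSeries.single_ne_zero one_ne_zero))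
    (fun r hr r' hr' horder => hinj hr hr' ?_) hzero
  simpa only [HahnSeries.order_mul_single_one (hcoeff r hr),
    HahnSeries.order_mul_single_one (hcoeff r' hr')] using horder
end

section
/- Let Λ = HahnSeries ℝ ℂ be the Novikov field and let f : ℝ →₀ Λ be a nonzero finitely supported function, regarded as the finite formal sum Σ_{r ∈ f.support} f(r)·z^r ∈ Λ[z^ℝ]. Then the set {t ∈ ℝ | Σ_{r ∈ f.support} f(r) · HahnSeries.single (t·r) 1 = 0} is a bounded subset of ℝ: there exists B ∈ ℝ such that every t in this set satisfies |t| ≤ B. -/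
/-!
The monomial `f r · T^{t r}` has `T`-adic order `ord (f r) + t r`, an affine function of `t`.
Two of these finitely many lines meet in at most one `t`, so off a finite set of parameters the
terms of `f(T^t)` have pairwise distinct orders; then the coefficient of the smallest order
cannot cancel and `f(T^t) ≠ 0`.
-/

open Finset

local notation "Λ" => HahnSeries ℝ ℂ

theorem HahnSeries.sum_ne_zero_of_injOn_order_s1 {ι Γ R : Type*} [Zero Γ] [LinearOrder Γ]
    [AddCommMonoid R] {s : Finset ι} {x : ι → HahnSeries Γ R} (hs : s.Nonempty)
    (hx : ∀ i ∈ s, x i ≠ 0) (hinj : Set.InjOn (fun i => (x i).order) s) :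
    ∑ i ∈ s, x i ≠ 0 := by
  obtain ⟨i₀, hi₀, hmin⟩ := s.exists_min_image (fun i => (x i).order) hs
  have hlt : ∀ i ∈ s, i ≠ i₀ → (x i₀).order < (x i).order := fun i hi hne =>
    (hmin i hi).lt_of_ne fun h => hne (hinj hi hi₀ h.symm)
  intro hsum
  have hcoeff := congrArg (HahnSeries.coeff · (x i₀).order) hsum
  simp only [HahnSeries.coeff_sum, HahnSeries.coeff_zero] at hcoeff
  rw [sum_eq_single_of_mem i₀ hi₀ fun i hi hne =>
    HahnSeries.coeff_eq_zero_of_lt_order (hlt i hi hne)] at hcoeff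
  exact hx i₀ hi₀ (HahnSeries.coeff_order_eq_zero.mp hcoeff)

section Specialization

variable {R : Type*} [Semiring R] [NoZeroDivisors R] [Nontrivial R]

theorem HahnSeries.order_mul_single_one_s1 {x : HahnSeries ℝ R} (hx : x ≠ 0) (a : ℝ) :
    (x * HahnSeries.single a (1 : R)).order = x.order + a := by
  rw [HahnSeries.order_mul hx (HahnSeries.single_ne_zero one_ne_zero),
    HahnSeries.order_single one_ne_zero]

/-- The parameters `t` at which the orders `ord (f r) + t r` of two distinct monomials of
`f(T^t)` coincide (the diagonal `r = s` contributes the junk value `0`). -/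
noncomputable def crossingTimes (f : ℝ →₀ HahnSeries ℝ R) : Finset ℝ :=
  (f.support ×ˢ f.support).image fun p => ((f p.2).order - (f p.1).order) / (p.1 - p.2)

theorem injOn_order_mul_single_of_notMem_crossingTimes {f : ℝ →₀ HahnSeries ℝ R} {t : ℝ}
    (ht : t ∉ crossingTimes f) :
    Set.InjOn (fun r => (f r * HahnSeries.single (t * r) (1 : R)).order) f.support := by
  intro r hr s hs hrs
  by_contra hne
  refine ht (mem_image.2 ⟨(r, s), mem_product.2 ⟨hr, hs⟩, ?_⟩)
  simp only [HahnSeries.order_mul_single_one_s1 (Finsupp.mem_support_iff.1 hr),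
    HahnSeries.order_mul_single_one_s1 (Finsupp.mem_support_iff.1 hs)] at hrs
  rw [div_eq_iff (sub_ne_zero.2 hne)]
  linarith

theorem sum_mul_single_ne_zero_of_notMem_crossingTimes {f : ℝ →₀ HahnSeries ℝ R} (hf : f ≠ 0)
    {t : ℝ} (ht : t ∉ crossingTimes f) :
    ∑ r ∈ f.support, f r * HahnSeries.single (t * r) (1 : R) ≠ 0 :=
  HahnSeries.sum_ne_zero_of_injOn_order_s1 (Finsupp.support_nonempty_iff.2 hf)
    (fun _ hr => mul_ne_zero (Finsupp.mem_support_iff.1 hr)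
      (HahnSeries.single_ne_zero one_ne_zero))
    (injOn_order_mul_single_of_notMem_crossingTimes ht)

end Specialization

/-- **Boundedness of zeros of the specialization of a finite Novikov sum.**
If `f : ℝ →₀ Λ` is a nonzero finite formal sum `Σ_r f(r)·z^r ∈ Λ[z^ℝ]`, then the set of
`t ∈ ℝ` at which the specialization `f(T^t) = Σ_r f(r)·T^{t·r}` vanishes is bounded:
there exists `B` with `|t| ≤ B` for all such `t`. -/
theorem bounded_zeros_of_specialization (f : ℝ →₀ Λ) (hf : f ≠ 0) :
    ∃ B : ℝ, ∀ t ∈ {t : ℝ | ∑ r ∈ f.support, f r * HahnSeries.single (t * r) (1 : ℂ) = 0},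
      |t| ≤ B := by
  obtain ⟨B, hB⟩ := ((crossingTimes f).image abs).bddAbove
  refine ⟨B, fun t ht => hB ?_⟩
  have hcross : t ∈ crossingTimes f := by
    by_contra h
    exact sum_mul_single_ne_zero_of_notMem_crossingTimes hf h ht
  exact mem_coe.2 (mem_image_of_mem _ hcross)
end

section
/- Let Λ = HahnSeries ℝ ℂ be the Novikov field and let M be an m × m' matrix with entries in Λ[z^ℝ] = AddMonoidAlgebra Λ ℝ. For t ∈ ℝ, let M_t denote the matrix over Λ obtained by applying the specialization at z = T^t to every entry of M. Then there exist r₀ ∈ ℕ and a finite set F ⊆ ℝ such that Matrix.rank M_t = r₀ for every t ∉ F, and Matrix.rank M_t ≤ r₀ for every t ∈ ℝ. In other words, the rank of the specialized matrix is constant in t with finitely many exceptions, where it can only drop. -/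
open HahnSeries

/-- The Novikov field `Λ = ℂ((T^ℝ))`, realized as Hahn series. -/
local notation "Λ" => HahnSeries ℝ ℂ

/-- The specialization of a finite formal sum `f = Σ_r f(r)·z^r ∈ Λ[z^ℝ]` at `z = T^t`:
`f(T^t) = Σ_{r ∈ supp f} f(r)·T^{t·r} ∈ Λ`. -/
noncomputable def specializeAt (t : ℝ) (f : AddMonoidAlgebra Λ ℝ) : Λ :=
  ∑ r ∈ f.coeff.support, f.coeff r * HahnSeries.single (t * r) (1 : ℂ)

/-!
For `f ≠ 0`, the lowest exponent of `f(T^t)` is `min_r (ord f(r) + t r)` as soon as this minimum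
is attained only once; the affine functions `t ↦ ord f(r) + t r` have distinct slopes, so this
fails for finitely many `t` only, and `f(T^t) ≠ 0` elsewhere.

Over a field the rank is the largest size of a nonvanishing minor. Pick `t₀` maximizing the rank
of `M_t` and a nonvanishing minor of `M_{t₀}` of that size. It is the specialization of the
corresponding minor `D` of `M`, so `D ≠ 0`, and off the finite zero set of `D(T^t)` the rank of
`M_t` is maximal again.
-/

namespace Matrix

variable {K m n : Type*} [Field K] [Fintype n]

theorem exists_linearIndependent_rows_submatrix [Fintype m] (A : Matrix m n K) :
    ∃ f : Fin A.rank → m, LinearIndependent K (A.submatrix f id).row := by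
  obtain ⟨κ, a, ha, hspan, hli⟩ := exists_linearIndependent' K A.row
  have : Fintype κ := Fintype.ofInjective a ha
  have hcard : A.rank = Fintype.card κ := by
    rw [rank_eq_finrank_span_row, ← hspan, finrank_span_eq_card hli]
  let e : Fin A.rank ≃ κ := (Fintype.equivFinOfCardEq hcard.symm).symm
  exact ⟨a ∘ e, hli.comp e e.injective⟩

theorem exists_submatrix_det_ne_zero [Fintype m] (A : Matrix m n K) :
    ∃ (f : Fin A.rank → m) (g : Fin A.rank → n), (A.submatrix f g).det ≠ 0 := by
  obtain ⟨f, hf⟩ := A.exists_linearIndependent_rows_submatrix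
  set B := A.submatrix f id
  have hBT : Bᵀ.rank = A.rank := by
    rw [rank_transpose, hf.rank_matrix, Fintype.card_fin]
  have hcols := Bᵀ.exists_linearIndependent_rows_submatrix
  rw [hBT] at hcols
  obtain ⟨g, hg⟩ := hcols
  have hunit : IsUnit (Bᵀ.submatrix g id) := linearIndependent_rows_iff_isUnit.1 hg
  refine ⟨f, g, ?_⟩
  rw [← det_transpose]
  exact ((isUnit_iff_isUnit_det _).1 hunit).ne_zero

theorem card_le_rank_of_submatrix_det_ne_zero {R ι : Type*} [CommRing R] [IsDomain R]
    [Fintype ι] [DecidableEq ι] (A : Matrix m n R) (f : ι → m) (g : ι → n)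
    (h : (A.submatrix f g).det ≠ 0) : Fintype.card ι ≤ A.rank :=
  rank_of_det_ne_zero h ▸ rank_submatrix_le A f g

end Matrix

noncomputable def monomialHom (t : ℝ) : Multiplicative ℝ →* Λ where
  toFun r := single (t * r.toAdd) 1
  map_one' := by simp
  map_mul' r s := by simp [mul_add, single_mul_single]

noncomputable def specializeAtHom (t : ℝ) : AddMonoidAlgebra Λ ℝ →ₐ[Λ] Λ :=
  AddMonoidAlgebra.lift Λ Λ ℝ (monomialHom t)

theorem coe_specializeAtHom (t : ℝ) : ⇑(specializeAtHom t) = specializeAt t := rfl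

theorem specializeAt_det {ι : Type*} [Fintype ι] [DecidableEq ι] (t : ℝ)
    (A : Matrix ι ι (AddMonoidAlgebra Λ ℝ)) :
    specializeAt t A.det = (A.map (specializeAt t)).det :=
  (specializeAtHom t).map_det A

theorem coeff_specializeAt (t x : ℝ) (f : AddMonoidAlgebra Λ ℝ) :
    (specializeAt t f).coeff x = ∑ r ∈ f.coeff.support, (f.coeff r).coeff (x - t * r) := by
  simp [specializeAt, coeff_sum, coeff_mul_single]

theorem specializeAt_ne_zero_of_injOn {t : ℝ} {f : AddMonoidAlgebra Λ ℝ} (hf : f ≠ 0)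
    (hinj : Set.InjOn (fun r => (f.coeff r).order + t * r) f.coeff.support) :
    specializeAt t f ≠ 0 := by
  set v := fun r => (f.coeff r).order + t * r
  obtain ⟨r₀, hr₀, hmin⟩ := f.coeff.support.exists_min_image v (by simpa using hf)
  have hlt : ∀ r ∈ f.coeff.support, r ≠ r₀ → (f.coeff r).coeff (v r₀ - t * r) = 0 := by
    intro r hr hne
    apply coeff_eq_zero_of_lt_order
    have : v r₀ < v r := (hmin r hr).lt_of_ne fun h => hne (hinj hr₀ hr h).symm
    simp only [v] at this ⊢
    linarith
  intro h0
  have hcoeff := coeff_specializeAt t (v r₀) f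
  rw [h0, coeff_zero, Finset.sum_eq_single_of_mem r₀ hr₀ hlt] at hcoeff
  simp only [v, add_sub_cancel_right] at hcoeff
  exact Finsupp.mem_support_iff.1 hr₀ (coeff_order_eq_zero.1 hcoeff.symm)

theorem finite_setOf_not_injOn_add_mul_s3 (a : ℝ → ℝ) {S : Set ℝ} (hS : S.Finite) :
    {t : ℝ | ¬ Set.InjOn (fun r => a r + t * r) S}.Finite := by
  have hline : ∀ p ∈ S.offDiag, {t : ℝ | a p.1 + t * p.1 = a p.2 + t * p.2}.Subsingleton := by
    rintro ⟨r, r'⟩ ⟨-, -, hne⟩ t₁ (h₁ : a r + t₁ * r = _) t₂ (h₂ : a r + t₂ * r = _)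
    have : (t₁ - t₂) * (r - r') = 0 := by linarith
    exact sub_eq_zero.1 ((mul_eq_zero.1 this).resolve_right (sub_ne_zero.2 hne))
  refine (hS.offDiag.biUnion fun p hp => (hline p hp).finite).subset fun t ht => ?_
  simp only [Set.InjOn, not_forall] at ht
  obtain ⟨r, hr, r', hr', heq, hne⟩ := ht
  exact Set.mem_biUnion (x := (r, r')) ⟨hr, hr', hne⟩ heq

theorem finite_setOf_specializeAt_eq_zero {f : AddMonoidAlgebra Λ ℝ} (hf : f ≠ 0) :
    {t : ℝ | specializeAt t f = 0}.Finite :=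
  (finite_setOf_not_injOn_add_mul_s3 _ f.coeff.support.finite_toSet).subset
    fun _ ht hinj => specializeAt_ne_zero_of_injOn hf hinj ht

/-- **Semicontinuity of rank of a matrix over `Λ[z^ℝ]` specialized along the real line.**
For a matrix `M` over `Λ[z^ℝ]`, the rank of the specialized matrix `M_t` (over the field
`Λ`) is constant, equal to some `r₀`, for all `t` outside a finite set, and is `≤ r₀`
everywhere. -/
theorem rank_specialized_matrix_constant_cofinite (m m' : ℕ)
    (M : Matrix (Fin m) (Fin m') (AddMonoidAlgebra Λ ℝ)) :
    ∃ (r₀ : ℕ) (F : Set ℝ), F.Finite ∧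
      (∀ t : ℝ, t ∉ F → (M.map (specializeAt t)).rank = r₀) ∧
      (∀ t : ℝ, (M.map (specializeAt t)).rank ≤ r₀) := by
  obtain ⟨_, ⟨t₀, rfl⟩, hmax⟩ := BddAbove.exists_isGreatest_of_nonempty
    (S := Set.range fun t => (M.map (specializeAt t)).rank)
    ⟨m, Set.forall_mem_range.2 fun t => Matrix.rank_le_height _⟩ (Set.range_nonempty _)
  have hle : ∀ t, (M.map (specializeAt t)).rank ≤ (M.map (specializeAt t₀)).rank :=
    Set.forall_mem_range.1 hmax
  obtain ⟨f, g, hdet⟩ := (M.map (specializeAt t₀)).exists_submatrix_det_ne_zero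
  set D := (M.submatrix f g).det
  have hD : ∀ t, ((M.map (specializeAt t)).submatrix f g).det = specializeAt t D := fun t =>
    (specializeAt_det t _).symm
  refine ⟨_, {t | specializeAt t D = 0}, finite_setOf_specializeAt_eq_zero ?_,
    fun t ht => le_antisymm (hle t) ?_, hle⟩
  · intro hD0
    rw [hD, hD0, ← coe_specializeAtHom, map_zero] at hdet
    exact hdet rfl
  · simpa using (M.map (specializeAt t)).card_le_rank_of_submatrix_det_ne_zero f g
      ((hD t).trans_ne ht)
end

section
/- Let R be a commutative Noetherian ring, k ≥ 1, and n₀, n₁, …, n_k ∈ ℕ. For i = 0, …, k−1 let D_i be an n_{i+1} × n_i matrix over R, and suppose D_{i+1}·D_i = 0 for all 0 ≤ i ≤ k−2, so that the maps v ↦ D_i·v form a bounded complex 0 → R^{n₀} → R^{n₁} → ⋯ → R^{n_k} → 0 of finite free R-modules. Suppose that for every maximal ideal 𝔪 of R, the complex of R/𝔪-vector spaces obtained by reducing each D_i modulo 𝔪 entrywise is acyclic, i.e. exact at every spot: the first reduced map is injective, at each intermediate spot the range of the incoming reduced map equals the kernel of the outgoing one, and the last reduced map is surjective. Then the original complex over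 R is acyclic in the same sense: v ↦ D₀·v is injective, range(v ↦ D_{i-1}·v) = ker(v ↦ D_i·v) at each intermediate spot, and v ↦ D_{k-1}·v is surjective. -/
/-!
Exactness of a complex of modules can be checked after localizing at every maximal ideal `𝔪`,
and the residue field of `R_𝔪` is `R/𝔪`, so it suffices to work over a local ring `(R, 𝔪, κ)`.
There a one-sided inverse of a reduced matrix lifts to a one-sided inverse (a lift of it
makes the product have determinant `1` modulo `𝔪`, hence a unit), which settles injectivity
and surjectivity. For exactness of `R^a → R^b → R^c` (given by `A`, `B`) at the middle, choose
columns `Q̄` spanning a complement of the range of `Ā` and lift them to `Q`. Then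
`range A + range Q = R^b` by the surjectivity case, and `B̄ Q̄` is injective because
`ker B̄ = range Ā`, so `B Q` is injective; writing `v ∈ ker B` as `A x + Q y` forces `y = 0`.
-/

open Matrix LinearMap

theorem Matrix.map_surjective {R S m n : Type*} {σ : R → S} (hσ : Function.Surjective σ) :
    Function.Surjective fun M : Matrix m n R => M.map σ :=
  fun M => ⟨M.map (Function.surjInv hσ), by ext; simp [Function.surjInv_eq]⟩

theorem LinearMap.range_eq_ker_of_sup_range_eq_top {R M N P Q : Type*} [Ring R]
    [AddCommGroup M] [AddCommGroup N] [AddCommGroup P] [AddCommGroup Q] [Module R M]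
    [Module R N] [Module R P] [Module R Q] {f : M →ₗ[R] N} {g : N →ₗ[R] P} {q : Q →ₗ[R] N}
    (hgf : g ∘ₗ f = 0) (hsup : range f ⊔ range q = ⊤) (hinj : Function.Injective (g ∘ₗ q)) :
    range f = ker g := by
  refine le_antisymm (range_le_ker_iff.mpr hgf) fun v hv => ?_
  obtain ⟨_, ⟨x, rfl⟩, _, ⟨y, rfl⟩, rfl⟩ := Submodule.mem_sup.mp (hsup ▸ Submodule.mem_top (x := v))
  have hy : y = 0 := hinj <| by
    simpa [show g (f x) = 0 from congr($hgf x)] using hv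
  simp [hy]

section Field

variable {K : Type*} [Field K] {m n : Type*} [Fintype m] [Fintype n]

theorem Matrix.exists_mul_eq_one_of_mulVecLin_injective [DecidableEq m] [DecidableEq n]
    {M : Matrix m n K} (h : Function.Injective M.mulVecLin) : ∃ N : Matrix n m K, N * M = 1 := by
  obtain ⟨g, hg⟩ := M.mulVecLin.exists_leftInverse_of_injective (ker_eq_bot.mpr h)
  refine ⟨toMatrix' g, toLin'.injective ?_⟩
  rw [toLin'_mul, toLin'_toMatrix', toLin'_one, toLin'_apply', hg]

theorem Matrix.exists_isCompl_range (W : Submodule K (m → K)) :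
    ∃ (p : ℕ) (Q : Matrix m (Fin p) K), IsCompl W (range Q.mulVecLin) ∧
      Function.Injective Q.mulVecLin := by
  obtain ⟨C, hC⟩ := W.exists_isCompl
  let e : (Fin _ → K) ≃ₗ[K] C := (Module.finBasis K C).equivFun.symm
  refine ⟨_, toMatrix' (C.subtype ∘ₗ e.toLinearMap), ?_, ?_⟩
  · rwa [← toLin'_apply', toLin'_toMatrix', range_comp, LinearEquiv.range, Submodule.map_top,
      Submodule.range_subtype]
  · rw [← toLin'_apply', toLin'_toMatrix', coe_comp]
    exact C.injective_subtype.comp e.injective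

end Field

section LocalRing

variable {R K : Type*} [CommRing R] [IsLocalRing R] [Field K] {σ : R →+* K}
  {l m n : Type*} [Fintype l] [Fintype m] [Fintype n]

theorem Matrix.exists_mul_eq_one_of_map_mul_eq_one [DecidableEq m] (hσ : Function.Surjective σ)
    (M : Matrix m n R) {N' : Matrix n m K} (h : M.map σ * N' = 1) :
    ∃ N : Matrix n m R, M * N = 1 := by
  have := IsLocalHom.of_surjective σ hσ
  obtain ⟨N, rfl⟩ := Matrix.map_surjective hσ N'
  have hdet : IsUnit (M * N).det := by
    refine isUnit_of_map_unit σ _ ?_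
    rw [RingHom.map_det, RingHom.mapMatrix_apply, Matrix.map_mul, h, det_one]
    exact isUnit_one
  exact ⟨N * (M * N)⁻¹, by rw [← Matrix.mul_assoc, mul_nonsing_inv _ hdet]⟩

theorem Matrix.exists_mul_eq_one_of_mul_map_eq_one [DecidableEq n] (hσ : Function.Surjective σ)
    (M : Matrix m n R) {N' : Matrix n m K} (h : N' * M.map σ = 1) :
    ∃ N : Matrix n m R, N * M = 1 := by
  obtain ⟨N, hN⟩ := Mᵀ.exists_mul_eq_one_of_map_mul_eq_one hσ (N' := N'ᵀ)
    (by rw [transpose_map, ← transpose_mul, h, transpose_one])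
  exact ⟨Nᵀ, by rw [← transpose_transpose M, ← transpose_mul, hN, transpose_one]⟩

theorem Matrix.mulVecLin_surjective_of_map (hσ : Function.Surjective σ) (M : Matrix m n R)
    (h : Function.Surjective (M.map σ).mulVecLin) : Function.Surjective M.mulVecLin := by
  classical
  obtain ⟨N', hN'⟩ := mulVec_surjective_iff_exists_right_inverse.mp h
  exact mulVec_surjective_iff_exists_right_inverse.mpr
    (M.exists_mul_eq_one_of_map_mul_eq_one hσ hN')

theorem Matrix.mulVecLin_injective_of_map (hσ : Function.Surjective σ) (M : Matrix m n R)
    (h : Function.Injective (M.map σ).mulVecLin) : Function.Injective M.mulVecLin := by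
  classical
  obtain ⟨N', hN'⟩ := exists_mul_eq_one_of_mulVecLin_injective h
  obtain ⟨N, hN⟩ := M.exists_mul_eq_one_of_mul_map_eq_one hσ hN'
  intro x y hxy
  simpa [mulVec_mulVec, hN] using congrArg (N *ᵥ ·) hxy

theorem Matrix.exists_sup_range_eq_top (hσ : Function.Surjective σ) (A : Matrix m n R) :
    ∃ (p : ℕ) (Q : Matrix m (Fin p) R), range A.mulVecLin ⊔ range Q.mulVecLin = ⊤ ∧
      IsCompl (range (A.map σ).mulVecLin) (range (Q.map σ).mulVecLin) ∧
      Function.Injective (Q.map σ).mulVecLin := by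
  obtain ⟨p, Q', hcompl, hinj⟩ := exists_isCompl_range (range (A.map σ).mulVecLin)
  obtain ⟨Q, rfl⟩ := Matrix.map_surjective hσ Q'
  refine ⟨p, Q, ?_, hcompl, hinj⟩
  have hsurj : Function.Surjective ((fromCols A Q).map σ).mulVecLin := by
    intro v
    obtain ⟨_, ⟨x, rfl⟩, _, ⟨y, rfl⟩, hv⟩ :=
      Submodule.mem_sup.mp (hcompl.sup_eq_top ▸ Submodule.mem_top (x := v))
    exact ⟨Sum.elim x y, by simp [fromCols_map, ← hv]⟩
  rw [eq_top_iff]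
  rintro v -
  obtain ⟨w, rfl⟩ := (fromCols A Q).mulVecLin_surjective_of_map hσ hsurj v
  rw [mulVecLin_apply, fromCols_mulVec]
  exact Submodule.add_mem_sup ⟨_, rfl⟩ ⟨_, rfl⟩

theorem Matrix.range_mulVecLin_eq_ker_of_map (hσ : Function.Surjective σ)
    (A : Matrix m n R) (B : Matrix l m R) (hBA : B * A = 0)
    (h : range (A.map σ).mulVecLin = ker (B.map σ).mulVecLin) :
    range A.mulVecLin = ker B.mulVecLin := by
  obtain ⟨p, Q, hsup, hcompl, hinj⟩ := A.exists_sup_range_eq_top hσ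
  have hinj_map : Function.Injective ((B * Q).map σ).mulVecLin := by
    rw [Matrix.map_mul, mulVecLin_mul, ← ker_eq_bot, ker_comp, ← h, eq_bot_iff]
    intro y hy
    have hQy : (Q.map σ).mulVecLin y ∈ range (A.map σ).mulVecLin ⊓ range (Q.map σ).mulVecLin :=
      ⟨hy, y, rfl⟩
    rw [hcompl.inf_eq_bot, Submodule.mem_bot] at hQy
    exact hinj (hQy.trans (map_zero _).symm)
  refine range_eq_ker_of_sup_range_eq_top (q := Q.mulVecLin) ?_ hsup ?_
  · rw [← mulVecLin_mul, hBA, mulVecLin_zero]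
  · rw [← mulVecLin_mul]
    exact (B * Q).mulVecLin_injective_of_map hσ hinj_map

end LocalRing

section Localization

variable {R : Type*} [CommRing R] {l m n : Type*} [Fintype l] [Fintype m] [Fintype n]

-- The coordinatewise localization map is written through `LinearMap.pi` so that the instance
-- `IsLocalizedModule.pi` applies to it.
theorem IsLocalizedModule.map_mulVecLin (S : Submonoid R) (Rₚ : Type*) [CommRing Rₚ]
    [Algebra R Rₚ] [IsLocalization S Rₚ] (M : Matrix m n R) :
    map S (LinearMap.pi fun i : n => Algebra.linearMap R Rₚ ∘ₗ proj i)
        (LinearMap.pi fun i : m => Algebra.linearMap R Rₚ ∘ₗ proj i) M.mulVecLin =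
      (M.map (algebraMap R Rₚ)).mulVecLin.restrictScalars R := by
  apply linearMap_ext S (LinearMap.pi fun i : n => Algebra.linearMap R Rₚ ∘ₗ proj i)
    (LinearMap.pi fun i : m => Algebra.linearMap R Rₚ ∘ₗ proj i)
  rw [map_comp]
  ext v i
  exact RingHom.map_mulVec (algebraMap R Rₚ) M v i

theorem Matrix.mulVecLin_injective_of_localization (M : Matrix m n R)
    (h : ∀ (P : Ideal R) [P.IsMaximal],
      Function.Injective (M.map (algebraMap R (Localization.AtPrime P))).mulVecLin) :
    Function.Injective M.mulVecLin :=
  injective_of_isLocalized_maximal _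
    (fun P _ => LinearMap.pi fun i => Algebra.linearMap R (Localization.AtPrime P) ∘ₗ proj i) _
    (fun P _ => LinearMap.pi fun i => Algebra.linearMap R (Localization.AtPrime P) ∘ₗ proj i) _
    fun P _ => by rw [IsLocalizedModule.map_mulVecLin]; exact h P

theorem Matrix.mulVecLin_surjective_of_localization (M : Matrix m n R)
    (h : ∀ (P : Ideal R) [P.IsMaximal],
      Function.Surjective (M.map (algebraMap R (Localization.AtPrime P))).mulVecLin) :
    Function.Surjective M.mulVecLin :=
  surjective_of_isLocalized_maximal _
    (fun P _ => LinearMap.pi fun i => Algebra.linearMap R (Localization.AtPrime P) ∘ₗ proj i) _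
    (fun P _ => LinearMap.pi fun i => Algebra.linearMap R (Localization.AtPrime P) ∘ₗ proj i) _
    fun P _ => by rw [IsLocalizedModule.map_mulVecLin]; exact h P

theorem Matrix.range_mulVecLin_eq_ker_of_localization (A : Matrix m n R) (B : Matrix l m R)
    (h : ∀ (P : Ideal R) [P.IsMaximal],
      range (A.map (algebraMap R (Localization.AtPrime P))).mulVecLin =
        ker (B.map (algebraMap R (Localization.AtPrime P))).mulVecLin) :
    range A.mulVecLin = ker B.mulVecLin := by
  rw [eq_comm, ← exact_iff]
  refine exact_of_isLocalized_maximal _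
    (fun P _ => LinearMap.pi fun i => Algebra.linearMap R (Localization.AtPrime P) ∘ₗ proj i) _
    (fun P _ => LinearMap.pi fun i => Algebra.linearMap R (Localization.AtPrime P) ∘ₗ proj i) _
    (fun P _ => LinearMap.pi fun i => Algebra.linearMap R (Localization.AtPrime P) ∘ₗ proj i) _ _
    fun P _ => ?_
  rw [IsLocalizedModule.map_mulVecLin, IsLocalizedModule.map_mulVecLin]
  exact (exact_iff.mpr (h P).symm : Function.Exact _ _)

theorem Ideal.exists_surjective_comp_algebraMap_eq_mk (P : Ideal R) [P.IsMaximal] :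
    ∃ σ : Localization.AtPrime P →+* R ⧸ P, Function.Surjective σ ∧
      σ.comp (algebraMap R _) = Ideal.Quotient.mk P := by
  let e := IsLocalization.AtPrime.equivQuotMaximalIdeal P (Localization.AtPrime P)
  exact ⟨e.symm.toRingHom.comp (Ideal.Quotient.mk _),
    e.symm.surjective.comp Ideal.Quotient.mk_surjective,
    RingHom.ext fun _ => e.symm_apply_eq.mpr rfl⟩

end Localization

section MaximalIdeals

attribute [local instance] Ideal.Quotient.field

variable {R : Type*} [CommRing R] {l m n : Type*} [Fintype l] [Fintype m] [Fintype n]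

theorem Matrix.mulVecLin_injective_of_forall_isMaximal (M : Matrix m n R)
    (h : ∀ P : Ideal R, P.IsMaximal →
      Function.Injective (M.map (Ideal.Quotient.mk P)).mulVecLin) :
    Function.Injective M.mulVecLin :=
  M.mulVecLin_injective_of_localization fun P hP => by
    obtain ⟨σ, hσ, hσP⟩ := P.exists_surjective_comp_algebraMap_eq_mk
    refine (M.map _).mulVecLin_injective_of_map hσ ?_
    rw [Matrix.map_map, ← RingHom.coe_comp, hσP]
    exact h P hP

theorem Matrix.mulVecLin_surjective_of_forall_isMaximal (M : Matrix m n R)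
    (h : ∀ P : Ideal R, P.IsMaximal →
      Function.Surjective (M.map (Ideal.Quotient.mk P)).mulVecLin) :
    Function.Surjective M.mulVecLin :=
  M.mulVecLin_surjective_of_localization fun P hP => by
    obtain ⟨σ, hσ, hσP⟩ := P.exists_surjective_comp_algebraMap_eq_mk
    refine (M.map _).mulVecLin_surjective_of_map hσ ?_
    rw [Matrix.map_map, ← RingHom.coe_comp, hσP]
    exact h P hP

theorem Matrix.range_mulVecLin_eq_ker_of_forall_isMaximal (A : Matrix m n R)
    (B : Matrix l m R) (hBA : B * A = 0)
    (h : ∀ P : Ideal R, P.IsMaximal →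
      range (A.map (Ideal.Quotient.mk P)).mulVecLin = ker (B.map (Ideal.Quotient.mk P)).mulVecLin) :
    range A.mulVecLin = ker B.mulVecLin :=
  A.range_mulVecLin_eq_ker_of_localization B fun P hP => by
    obtain ⟨σ, hσ, hσP⟩ := P.exists_surjective_comp_algebraMap_eq_mk
    refine (A.map _).range_mulVecLin_eq_ker_of_map hσ (B.map _)
      (by rw [← Matrix.map_mul, hBA, Matrix.map_zero _ (map_zero _)]) ?_
    rw [Matrix.map_map, Matrix.map_map, ← RingHom.coe_comp, hσP]
    exact h P hP

end MaximalIdeals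

theorem acyclic_of_pointwise_acyclic_general (R : Type*) [CommRing R]
    (k : ℕ) (n : ℕ → ℕ)
    (D : ∀ i : ℕ, Matrix (Fin (n (i + 1))) (Fin (n i)) R)
    (hcomp : ∀ i : ℕ, i + 1 < k → D (i + 1) * D i = 0)
    (hpt : ∀ 𝔪 : Ideal R, 𝔪.IsMaximal →
      Function.Injective (Matrix.mulVecLin ((D 0).map (Ideal.Quotient.mk 𝔪))) ∧
      (∀ i : ℕ, i + 1 < k →
        LinearMap.range (Matrix.mulVecLin ((D i).map (Ideal.Quotient.mk 𝔪))) =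
          LinearMap.ker (Matrix.mulVecLin ((D (i + 1)).map (Ideal.Quotient.mk 𝔪)))) ∧
      Function.Surjective (Matrix.mulVecLin ((D (k - 1)).map (Ideal.Quotient.mk 𝔪)))) :
    Function.Injective (Matrix.mulVecLin (D 0)) ∧
      (∀ i : ℕ, i + 1 < k →
        LinearMap.range (Matrix.mulVecLin (D i)) =
          LinearMap.ker (Matrix.mulVecLin (D (i + 1)))) ∧
      Function.Surjective (Matrix.mulVecLin (D (k - 1))) :=
  ⟨(D 0).mulVecLin_injective_of_forall_isMaximal fun 𝔪 h𝔪 => (hpt 𝔪 h𝔪).1,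
    fun i hi => (D i).range_mulVecLin_eq_ker_of_forall_isMaximal (D (i + 1)) (hcomp i hi)
      fun 𝔪 h𝔪 => (hpt 𝔪 h𝔪).2.1 i hi,
    (D (k - 1)).mulVecLin_surjective_of_forall_isMaximal fun 𝔪 h𝔪 => (hpt 𝔪 h𝔪).2.2⟩

/-- **Pointwise acyclicity implies acyclicity for bounded complexes of finite free
modules over a Noetherian ring.**  Let `0 → R^{n₀} → R^{n₁} → ⋯ → R^{n_k} → 0` be a
complex of finite free modules over a commutative Noetherian ring `R`, given by matrices
`D i` with consecutive products zero.  If for every maximal ideal `𝔪` the complex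
reduced modulo `𝔪` is exact at every spot (first map injective, intermediate ranges
equal to kernels, last map surjective), then the complex over `R` itself is exact at
every spot. -/
theorem acyclic_of_pointwise_acyclic (R : Type*) [CommRing R] [IsNoetherianRing R]
    (k : ℕ) (hk : 1 ≤ k) (n : ℕ → ℕ)
    (D : ∀ i : ℕ, Matrix (Fin (n (i + 1))) (Fin (n i)) R)
    (hcomp : ∀ i : ℕ, i + 1 < k → D (i + 1) * D i = 0)
    (hpt : ∀ 𝔪 : Ideal R, 𝔪.IsMaximal →
      Function.Injective (Matrix.mulVecLin ((D 0).map (Ideal.Quotient.mk 𝔪))) ∧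
      (∀ i : ℕ, i + 1 < k →
        LinearMap.range (Matrix.mulVecLin ((D i).map (Ideal.Quotient.mk 𝔪))) =
          LinearMap.ker (Matrix.mulVecLin ((D (i + 1)).map (Ideal.Quotient.mk 𝔪)))) ∧
      Function.Surjective (Matrix.mulVecLin ((D (k - 1)).map (Ideal.Quotient.mk 𝔪)))) :
    Function.Injective (Matrix.mulVecLin (D 0)) ∧
      (∀ i : ℕ, i + 1 < k →
        LinearMap.range (Matrix.mulVecLin (D i)) =
          LinearMap.ker (Matrix.mulVecLin (D (i + 1)))) ∧
      Function.Surjective (Matrix.mulVecLin (D (k - 1))) :=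
  acyclic_of_pointwise_acyclic_general R k n D hcomp hpt
end

section
/- Let 𝒞 be a preadditive category and let X, Y be objects of 𝒞 such that the endomorphism rings End(X) and End(Y) are local rings (Mathlib's IsLocalRing: nontrivial rings in which the sum of any two non-units is a non-unit). Suppose there exist q ∈ ℕ and families f : Fin q → (X ⟶ Y), g : Fin q → (Y ⟶ X) with Σ_{i < q} (f i ≫ g i) = 𝟙 X, and q' ∈ ℕ and families p : Fin q' → (Y ⟶ X), u : Fin q' → (X ⟶ Y) with Σ_{j < q'} (p j ≫ u j) = 𝟙 Y. Then X and Y are isomorphic. -/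
/-!
Since `∑ fᵢ ≫ gᵢ = 𝟙 X` is a unit of the local ring `End X`, some summand `fᵢ ≫ gᵢ` is a
unit, so `fᵢ : X ⟶ Y` is a split monomorphism, with retraction `r`, say.
Then `r ≫ fᵢ` is an idempotent of the local ring `End Y`, hence `0` or `𝟙 Y`; it cannot be `0`
because `𝟙 X ≠ 0`, so `fᵢ` is an isomorphism.
-/

open CategoryTheory

theorem IsLocalRing.eq_zero_or_eq_one_of_isIdempotentElem {R : Type*} [Ring R] [IsLocalRing R]
    {e : R} (he : IsIdempotentElem e) : e = 0 ∨ e = 1 := by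
  rcases IsLocalRing.isUnit_or_isUnit_of_add_one (add_sub_cancel e 1) with h | h
  · exact Or.inr ((IsIdempotentElem.iff_eq_one_of_isUnit h).mp he)
  · exact Or.inl (sub_eq_self.mp ((IsIdempotentElem.iff_eq_one_of_isUnit h).mp he.one_sub))

namespace CategoryTheory

variable {C : Type*} [Category C]

theorem isSplitMono_of_isUnit_comp {X Y : C} (f : X ⟶ Y) (g : Y ⟶ X)
    (h : IsUnit (End.of (f ≫ g))) : IsSplitMono f :=
  have : IsIso (f ≫ g) := (isUnit_iff_isIso _).mp h
  IsSplitMono.mk'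
    { retraction := g ≫ inv (f ≫ g)
      id := by rw [← Category.assoc, IsIso.hom_inv_id] }

variable [Preadditive C]

theorem exists_isSplitMono_of_sum_comp_eq_id {X Y : C} [IsLocalRing (End X)] {ι : Type*}
    [Fintype ι] (f : ι → (X ⟶ Y)) (g : ι → (Y ⟶ X)) (h : ∑ i, f i ≫ g i = 𝟙 X) :
    ∃ i, IsSplitMono (f i) := by
  obtain ⟨i, -, hi⟩ := IsLocalRing.exists_of_isUnit_sum (R := End X)
    (s := Finset.univ) (f := fun i ↦ End.of (f i ≫ g i)) (h ▸ isUnit_one)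
  exact ⟨i, isSplitMono_of_isUnit_comp _ _ hi⟩

theorem isIso_of_isSplitMono_of_isLocalRing_end {X Y : C} [Nontrivial (End X)]
    [IsLocalRing (End Y)] (f : X ⟶ Y) [IsSplitMono f] : IsIso f := by
  have hidem : IsIdempotentElem (End.of (retraction f ≫ f)) := by
    simp [IsIdempotentElem, End.mul_def]
  rcases IsLocalRing.eq_zero_or_eq_one_of_isIdempotentElem hidem with hzero | hone
  · refine absurd ?_ (one_ne_zero (α := End X))
    calc (1 : End X) = f ≫ (retraction f ≫ f) ≫ retraction f := by simp
      _ = 0 := by rw [show (retraction f ≫ f : Y ⟶ Y) = 0 from hzero]; simp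
  · exact ⟨retraction f, IsSplitMono.id f, hone⟩

end CategoryTheory

theorem iso_of_stably_isomorphic_of_local_end_general {C : Type*} [Category C] [Preadditive C]
    (X Y : C) [IsLocalRing (End X)] [IsLocalRing (End Y)]
    (q : ℕ) (f : Fin q → (X ⟶ Y)) (g : Fin q → (Y ⟶ X))
    (hX : ∑ i : Fin q, f i ≫ g i = 𝟙 X) :
    Nonempty (X ≅ Y) := by
  obtain ⟨i, _⟩ := exists_isSplitMono_of_sum_comp_eq_id f g hX
  have := isIso_of_isSplitMono_of_isLocalRing_end (f i)
  exact ⟨asIso (f i)⟩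

/-- **Stably isomorphic objects with local endomorphism rings are isomorphic.**
In a preadditive category, if `End X` and `End Y` are local rings and the composition
pairings `Hom(Y,X) ⊗ Hom(X,Y) → End X` and `Hom(X,Y) ⊗ Hom(Y,X) → End Y` both hit the
respective identities (i.e. `X` and `Y` are stably isomorphic), then `X ≅ Y`. -/
theorem iso_of_stably_isomorphic_of_local_end {C : Type*} [Category C] [Preadditive C]
    (X Y : C) [IsLocalRing (End X)] [IsLocalRing (End Y)]
    (q : ℕ) (f : Fin q → (X ⟶ Y)) (g : Fin q → (Y ⟶ X))
    (hX : ∑ i : Fin q, f i ≫ g i = 𝟙 X)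
    (q' : ℕ) (p : Fin q' → (Y ⟶ X)) (u : Fin q' → (X ⟶ Y))
    (hY : ∑ j : Fin q', p j ≫ u j = 𝟙 Y) :
    Nonempty (X ≅ Y) :=
  iso_of_stably_isomorphic_of_local_end_general X Y q f g hX
end
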